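/- arXiv:1605.04365 — 2 statements merged into one kernel-verified Lean document; each statement's English description precedes it below -/
import Mathlib

section
/- The product * on linear maps W → V is associative, the zero map is a two-sided identity for *, and every φ ∈ Aut_a(W,V) has the two-sided *-inverse −φ ∘ (φ^W)^{-1}, which again lies in Aut_a(W,V). Hence (Aut_a(W,V), *) is a group with identity 0 and inversion φ ↦ −φ ∘ (φ^W)^{-1}. -/
/-- `φ^W := id_W − a ∘ φ`, a linear endomorphism of `W`. -/
noncomputable def phiW {V W : Type*} [AddCommGroup V] [Module ℝ V]
    [AddCommGroup W] [Module ℝ W] (a : V →ₗ[ℝ] W) (φ : W →ₗ[ℝ] V) : W →ₗ[ℝ] W :=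
  LinearMap.id - a ∘ₗ φ

/-- The product `ψ * φ := ψ + φ − ψ ∘ a ∘ φ` on linear maps `W → V`. -/
noncomputable def starProd {V W : Type*} [AddCommGroup V] [Module ℝ V]
    [AddCommGroup W] [Module ℝ W] (a : V →ₗ[ℝ] W) (ψ φ : W →ₗ[ℝ] V) : W →ₗ[ℝ] V :=
  ψ + φ - ψ ∘ₗ a ∘ₗ φ

/-- The product `*` is associative, the zero map is a two-sided identity, and every
`φ ∈ Aut_a(W,V)` (i.e. with `φ^W` bijective, with linear two-sided inverse `g`) has the
two-sided `*`-inverse `−φ ∘ (φ^W)⁻¹`, which again lies in `Aut_a(W,V)`. -/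
theorem stmt1 {V W : Type*} [AddCommGroup V] [Module ℝ V]
    [AddCommGroup W] [Module ℝ W] [FiniteDimensional ℝ V] [FiniteDimensional ℝ W]
    (a : V →ₗ[ℝ] W) :
    (∀ χ ψ φ : W →ₗ[ℝ] V, starProd a (starProd a χ ψ) φ = starProd a χ (starProd a ψ φ)) ∧
    (∀ φ : W →ₗ[ℝ] V, starProd a 0 φ = φ ∧ starProd a φ 0 = φ) ∧
    (∀ φ : W →ₗ[ℝ] V, ∀ g : W →ₗ[ℝ] W,
      phiW a φ ∘ₗ g = LinearMap.id → g ∘ₗ phiW a φ = LinearMap.id →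
      starProd a (-(φ ∘ₗ g)) φ = 0 ∧ starProd a φ (-(φ ∘ₗ g)) = 0 ∧
        Function.Bijective ⇑(phiW a (-(φ ∘ₗ g)))) := by
  refine ⟨?_, ?_, ?_⟩
  · intro χ ψ φ
    ext x
    simp only [starProd, LinearMap.sub_apply, LinearMap.add_apply, LinearMap.comp_apply,
      map_add, map_sub]
    abel
  · intro φ
    constructor <;> ext x <;>
      simp [starProd]
  · intro φ g hg1 hg2
    -- pointwise consequences
    have h1 : ∀ x, a (φ (g x)) = g x - x := by
      intro x
      have := congrArg (fun f : W →ₗ[ℝ] W => f x) hg1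
      simp only [phiW, LinearMap.comp_apply, LinearMap.sub_apply, LinearMap.id_apply] at this ⊢
      linear_combination (norm := abel) -this
    have h2 : ∀ x, g (a (φ x)) = g x - x := by
      intro x
      have := congrArg (fun f : W →ₗ[ℝ] W => f x) hg2
      simp only [phiW, LinearMap.comp_apply, LinearMap.sub_apply, LinearMap.id_apply,
        map_sub] at this ⊢
      linear_combination (norm := abel) -this
    refine ⟨?_, ?_, ?_⟩
    · ext x
      simp only [starProd, LinearMap.sub_apply, LinearMap.add_apply, LinearMap.comp_apply,
        LinearMap.neg_apply, LinearMap.zero_apply, h2, map_sub]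
      abel
    · ext x
      simp only [starProd, LinearMap.sub_apply, LinearMap.add_apply, LinearMap.comp_apply,
        LinearMap.neg_apply, LinearMap.zero_apply, map_neg, h1, map_sub]
      abel
    · have key1 : ∀ x, phiW a (-(φ ∘ₗ g)) ((phiW a φ) x) = x := by
        intro x
        simp only [phiW, LinearMap.sub_apply, LinearMap.comp_apply, LinearMap.id_apply,
          LinearMap.neg_apply, map_neg, map_sub, h2]
        abel
      have key2 : ∀ x, phiW a φ (phiW a (-(φ ∘ₗ g)) x) = x := by
        intro x
        simp only [phiW, LinearMap.sub_apply, LinearMap.comp_apply, LinearMap.id_apply,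
          LinearMap.neg_apply, map_neg, map_sub, map_add, h1]
        abel
      exact ⟨Function.LeftInverse.injective key2, Function.LeftInverse.surjective key1⟩
end

section
/- The map φ ↦ φ^W is a group homomorphism from the group (Aut_a(W,V), *) to the group GL(W) of linear automorphisms of W, and its kernel {φ ∈ Aut_a(W,V) : a ∘ φ = 0} is a commutative subgroup: on this kernel the product * coincides with addition of linear maps. -/
/-- The map `φ ↦ φ^W` is a group homomorphism from `(Aut_a(W,V), *)` to `GL(W)`, and its
kernel `{φ : a ∘ φ = 0}` is a commutative subgroup on which `*` coincides with addition. -/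
theorem stmt2 {V W : Type*} [AddCommGroup V] [Module ℝ V]
    [AddCommGroup W] [Module ℝ W] [FiniteDimensional ℝ V] [FiniteDimensional ℝ W]
    (a : V →ₗ[ℝ] W) :
    (∀ ψ φ : W →ₗ[ℝ] V, phiW a (starProd a ψ φ) = phiW a ψ ∘ₗ phiW a φ) ∧
    (∀ ψ φ : W →ₗ[ℝ] V, a ∘ₗ ψ = 0 → a ∘ₗ φ = 0 →
      a ∘ₗ starProd a ψ φ = 0 ∧ starProd a ψ φ = ψ + φ ∧
        starProd a ψ φ = starProd a φ ψ) := by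
  constructor
  · intro ψ φ
    ext w
    simp [phiW, starProd, LinearMap.comp_apply, map_sub, map_add, sub_add_eq_sub_sub]
    abel
  · intro ψ φ hψ hφ
    have key : ∀ (χ : W →ₗ[ℝ] V) (w : W), a ∘ₗ χ = 0 → a (χ w) = 0 := by
      intro χ w h
      have := congrArg (fun f => f w) h
      simpa [LinearMap.comp_apply] using this
    have hψφ : ψ ∘ₗ a ∘ₗ φ = 0 := by
      ext w
      simp [LinearMap.comp_apply, key φ w hφ]
    have hφψ : φ ∘ₗ a ∘ₗ ψ = 0 := by
      ext w
      simp [LinearMap.comp_apply, key ψ w hψ]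
    refine ⟨?_, ?_, ?_⟩
    · simp [starProd, hψφ, LinearMap.comp_add, LinearMap.comp_sub, hψ, hφ]
    · simp [starProd, hψφ]
    · simp [starProd, hψφ, hφψ, add_comm]
end
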